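/- For positive integers k and n, the sum of mex(π)^k over partitions π of n with mex(π) even equals Σ_{m≥0} ((1−δ_m)(m+1)^k − δ_m m^k) p(n − m(m+1)/2), where δ_m = 1 if m is even and 0 otherwise, and p(j)=0 for j<0. -/

import Mathlib

open Finset

/-- The minimal excludant of a partition: the least positive integer not a part. -/
noncomputable def mex {n : ℕ} (π : Nat.Partition n) : ℕ :=
  sInf {m : ℕ | 0 < m ∧ m ∉ π.parts}

/-- Number of partitions of `n` with minimal excludant `m`. -/
noncomputable def pmex (m n : ℕ) : ℕ :=
  ((Finset.univ : Finset (Nat.Partition n)).filter (fun π => mex π = m)).card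

/-- The partition function, extended by `0` on negative integers. -/
noncomputable def pz (k : ℤ) : ℕ := if 0 ≤ k then Fintype.card (Nat.Partition k.toNat) else 0

/-- Number of partitions of `m` into distinct parts. -/
def qdist (m : ℕ) : ℕ := (Nat.Partition.distincts m).card

/-- A two-colored distinct-parts partition of `n`: a set of distinct (part, color)
pairs with positive parts summing to `n`. -/
def IsTCD (n : ℕ) (s : Finset (ℕ × Fin 2)) : Prop :=
  (∀ p ∈ s, 0 < p.1) ∧ ∑ p ∈ s, p.1 = n

noncomputable def D2 (n : ℕ) : ℕ := Set.ncard {s : Finset (ℕ × Fin 2) | IsTCD n s}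
noncomputable def D2e (n : ℕ) : ℕ :=
  Set.ncard {s : Finset (ℕ × Fin 2) | IsTCD n s ∧ Even s.card}
noncomputable def D2o (n : ℕ) : ℕ :=
  Set.ncard {s : Finset (ℕ × Fin 2) | IsTCD n s ∧ Odd s.card}

/-! Put `f j = j ^ k` for even `j` and `f j = 0` for odd `j`. As `k > 0`, `f 0 = 0`, so
`f (mex π)` telescopes to `∑_{m < mex π} (f (m + 1) - f m)`, and `f (m + 1) - f m` is the coefficient on the right.
Exchanging the two sums leaves, for each `m`, the number of partitions with `m < mex π`, i.e.
containing each of `1, …, m` as a part; deleting these parts is a bijection onto the partitions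
of `n - m (m + 1) / 2`. -/

theorem Finset.sum_Icc_one_id (m : ℕ) : ∑ i ∈ Icc 1 m, i = m * (m + 1) / 2 :=
  calc ∑ i ∈ Icc 1 m, i = ∑ i ∈ Ioc 0 m, i + 0 := by
        rw [add_zero, ← Icc_add_one_left_eq_Ioc, zero_add]
    _ = ∑ i ∈ range (m + 1), i := by
        rw [sum_Ioc_add_eq_sum_Icc m.zero_le, Nat.range_succ_eq_Icc_zero]
    _ = m * (m + 1) / 2 := by rw [sum_range_id, Nat.add_sub_cancel, mul_comm]

theorem Finset.sum_comp_eq_sum_range_mul_card_filter_lt {α : Type*} (s : Finset α) (g : α → ℕ)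
    {N : ℕ} (hg : ∀ x ∈ s, g x ≤ N) (f : ℕ → ℤ) (hf : f 0 = 0) :
    ∑ x ∈ s, f (g x) = ∑ m ∈ range N, (f (m + 1) - f m) * #{x ∈ s | m < g x} :=
  calc ∑ x ∈ s, f (g x)
      = ∑ x ∈ s, ∑ m ∈ range N, if m < g x then f (m + 1) - f m else 0 := by
        refine sum_congr rfl fun x hx => ?_
        have hrange : {m ∈ range N | m < g x} = range (g x) := by
          ext m
          simp only [mem_filter, mem_range]
          have := hg x hx
          omega
        rw [← sum_filter, hrange, sum_range_sub, hf, sub_zero]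
    _ = ∑ m ∈ range N, (f (m + 1) - f m) * #{x ∈ s | m < g x} := by
        rw [sum_comm]
        refine sum_congr rfl fun m _ => ?_
        rw [← sum_filter, sum_const, nsmul_eq_mul, mul_comm]

namespace Nat.Partition

theorem sum_le_of_le_parts {n : ℕ} {p : n.Partition} {s : Multiset ℕ} (h : s ≤ p.parts) :
    s.sum ≤ n := by
  obtain ⟨u, hu⟩ := Multiset.le_iff_exists_add.1 h
  rw [← p.parts_sum, hu, Multiset.sum_add]
  exact Nat.le_add_right _ _

def partitionWithSubmultisetEquiv {n : ℕ} {s : Multiset ℕ} (hs : ∀ i ∈ s, 0 < i)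
    (hsn : s.sum ≤ n) : {p : n.Partition // s ≤ p.parts} ≃ (n - s.sum).Partition where
  toFun p := ⟨p.1.parts - s,
    fun hi => p.1.parts_pos (Multiset.subset_of_le (Multiset.sub_le_self _ _) hi), by
    have := congrArg Multiset.sum (tsub_add_cancel_of_le p.2)
    rw [Multiset.sum_add, p.1.parts_sum] at this
    omega⟩
  invFun q := ⟨⟨q.parts + s, by grind [q.parts_pos], by
    rw [Multiset.sum_add, q.parts_sum]; omega⟩, Multiset.le_add_left _ _⟩
  left_inv p := Subtype.ext <| Partition.ext <| tsub_add_cancel_of_le p.2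
  right_inv q := Partition.ext <| add_tsub_cancel_right _ _

theorem card_filter_le_parts (n : ℕ) {s : Multiset ℕ} (hs : ∀ i ∈ s, 0 < i) :
    #{p : n.Partition | s ≤ p.parts} = pz ((n : ℤ) - s.sum) := by
  by_cases hsn : s.sum ≤ n
  · rw [← Fintype.card_subtype, Fintype.card_congr (partitionWithSubmultisetEquiv hs hsn), pz,
      if_pos (by omega), show ((n : ℤ) - s.sum).toNat = n - s.sum by omega]
  · rw [pz, if_neg (by omega), Finset.card_eq_zero, filter_eq_empty_iff]
    exact fun p _ hle => hsn (sum_le_of_le_parts hle)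

theorem succ_notMem_parts {n : ℕ} (π : n.Partition) : n + 1 ∉ π.parts :=
  fun h => (π.le_of_mem_parts h).not_gt n.lt_succ_self

end Nat.Partition

theorem mex_le {n : ℕ} (π : n.Partition) : mex π ≤ n + 1 :=
  Nat.sInf_le ⟨n.succ_pos, π.succ_notMem_parts⟩

theorem lt_mex_iff {n m : ℕ} {π : n.Partition} : m < mex π ↔ ∀ i ∈ Icc 1 m, i ∈ π.parts := by
  obtain ⟨hpos, hnotMem⟩ : 0 < mex π ∧ mex π ∉ π.parts :=
    Nat.sInf_mem (s := {m | 0 < m ∧ m ∉ π.parts}) ⟨n + 1, n.succ_pos, π.succ_notMem_parts⟩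
  constructor
  · intro hm i hi
    by_contra h
    have : mex π ≤ i := Nat.sInf_le ⟨(mem_Icc.1 hi).1, h⟩
    have := (mem_Icc.1 hi).2
    omega
  · intro h
    by_contra! hm
    exact hnotMem (h _ (mem_Icc.2 ⟨hpos, hm⟩))

theorem card_filter_lt_mex (n m : ℕ) :
    #{π : n.Partition | m < mex π} = pz ((n : ℤ) - (m * (m + 1) / 2 : ℕ)) := by
  have hle (π : n.Partition) : m < mex π ↔ (Icc 1 m).val ≤ π.parts := by
    rw [lt_mex_iff, Multiset.le_iff_subset (Icc 1 m).nodup]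
    rfl
  simp_rw [hle]
  rw [Nat.Partition.card_filter_le_parts n fun i hi => (mem_Icc.1 hi).1, Finset.sum_val,
    ← Finset.sum_Icc_one_id]
  rfl

theorem kth_moment_even_mex_general (k n : ℕ) (hk : 0 < k) :
    ∑ π ∈ Finset.univ.filter (fun π : Nat.Partition n => Even (mex π)),
        (mex π : ℤ) ^ k =
      ∑ m ∈ Finset.range (n + 1),
        ((1 - if Even m then (1 : ℤ) else 0) * (m + 1) ^ k -
          (if Even m then (1 : ℤ) else 0) * m ^ k) *
          pz ((n : ℤ) - (m * (m + 1) / 2 : ℕ)) := by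
  set f : ℕ → ℤ := fun j => if Even j then (j : ℤ) ^ k else 0
  have hf : f 0 = 0 := by simp [f, zero_pow hk.ne']
  rw [sum_filter, sum_comp_eq_sum_range_mul_card_filter_lt univ mex (fun π _ => mex_le π) f hf]
  refine sum_congr rfl fun m _ => ?_
  rw [card_filter_lt_mex]
  congr 1
  rcases Nat.even_or_odd m with hm | hm
  · simp [f, hm, Nat.even_add_one]
  · simp [f, hm, Nat.not_even_iff_odd.2 hm]

theorem kth_moment_even_mex (k n : ℕ) (hk : 0 < k) (hn : 0 < n) :
    ∑ π ∈ Finset.univ.filter (fun π : Nat.Partition n => Even (mex π)),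
        (mex π : ℤ) ^ k =
      ∑ m ∈ Finset.range (n + 1),
        ((1 - if Even m then (1 : ℤ) else 0) * (m + 1) ^ k -
          (if Even m then (1 : ℤ) else 0) * m ^ k) *
          pz ((n : ℤ) - (m * (m + 1) / 2 : ℕ)) :=
  kth_moment_even_mex_general k n hk
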